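/- Let a ∈ ℤ and let b be an integer with |b| ≥ 2. Then the direct limit of the system ℤ² → ℤ² → ℤ² → ⋯ in which every bonding map is multiplication by the matrix M = [[1, a],[0, b]] is isomorphic, as an abelian group, to ℤ ⊕ ℤ[1/b]. -/

import Mathlib

/-!
Write `M = [[1, a], [0, b]]` and `N = diag(1, b)`. Pick coprime `A, B` with `A a = B (b - 1)`, so
that `(A, -B)` is a left fixed vector of `M`, and complete it by a Bézout relation `u A + v B = 1`
to the unimodular matrices `Pᵢ = [[A, -B], [v bⁱ, u - v a (1 + b + ⋯ + bⁱ⁻¹)]]`. These satisfy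
`Pᵢ₊₁ M = N Pᵢ`, so they identify the given system with the one whose bonding maps are `N`. That
one embeds compatibly into `ℤ × ℤ[1/b]` by `(x, y) ↦ (x, y / bⁱ)` at stage `i`, and every element
of `ℤ × ℤ[1/b]` is hit at some stage.
-/

/-- The subgroup `ℤ[1/b] = {m / bᵏ : m ∈ ℤ, k ∈ ℕ}` of `ℚ`. -/
def zOneOverPow (b : ℤ) (hb : b ≠ 0) : AddSubgroup ℚ where
  carrier := {q : ℚ | ∃ (m : ℤ) (k : ℕ), q = (m : ℚ) / (b : ℚ) ^ k}
  zero_mem' := ⟨0, 0, by simp⟩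
  add_mem' := by
    rintro x y ⟨m, k, rfl⟩ ⟨m', l, rfl⟩
    refine ⟨m * b ^ l + m' * b ^ k, k + l, ?_⟩
    have hb' : (b : ℚ) ≠ 0 := Int.cast_ne_zero.mpr hb
    have h1 : (b : ℚ) ^ k ≠ 0 := pow_ne_zero _ hb'
    have h2 : (b : ℚ) ^ l ≠ 0 := pow_ne_zero _ hb'
    rw [div_add_div _ _ h1 h2, pow_add]
    push_cast
    ring
  neg_mem' := by
    rintro x ⟨m, k, rfl⟩
    exact ⟨-m, k, by push_cast; ring⟩

theorem mul_pow_eq_pow_mul_of_forall_succ {M : Type*} [Monoid M] {P : ℕ → M} {m n : M}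
    (h : ∀ i, P (i + 1) * m = n * P i) (i k : ℕ) : P (i + k) * m ^ k = n ^ k * P i := by
  induction k generalizing i with
  | zero => simp
  | succ k ih =>
    calc P (i + (k + 1)) * m ^ (k + 1) = P (i + 1 + k) * m ^ k * m := by
          rw [pow_succ, ← mul_assoc, Nat.add_right_comm, add_assoc]
      _ = n ^ k * (P (i + 1) * m) := by rw [ih, mul_assoc]
      _ = n ^ (k + 1) * P i := by rw [h, pow_succ, mul_assoc]

theorem Int.exists_isCoprime_mul_eq_mul (a c : ℤ) : ∃ A B : ℤ, IsCoprime A B ∧ A * a = B * c := by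
  by_cases hc : c = 0
  · exact ⟨0, 1, isCoprime_zero_left.2 isUnit_one, by simp [hc]⟩
  obtain ⟨g, a', c', -, hgcd, rfl, rfl⟩ :=
    Int.exists_gcd_one' (Int.gcd_pos_of_ne_zero_right a hc)
  refine ⟨c', a', Int.isCoprime_iff_gcd_eq_one.2 (by rwa [Int.gcd_comm]), by ring⟩

namespace Module.DirectLimit

variable {R ι : Type*} [Semiring R] [Preorder ι] [DecidableEq ι] {G : ι → Type*}
  [∀ i, AddCommMonoid (G i)] [∀ i, Module R (G i)] {f : ∀ i j, i ≤ j → G i →ₗ[R] G j}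
  {P : Type*} [AddCommMonoid P] [Module R P] {g : ∀ i, G i →ₗ[R] P}
  {Hg : ∀ i j hij x, g j (f i j hij x) = g i x}

theorem lift_surjective (h : ∀ y, ∃ i x, g i x = y) : Function.Surjective (lift R ι G f g Hg) :=
  fun y ↦ let ⟨i, x, hx⟩ := h y; ⟨of R ι G f i x, by rw [lift_of, hx]⟩

end Module.DirectLimit

open Matrix

section Intertwiner

variable {R : Type*} [CommRing R] (a b A B u v : R)

def intertwiner (i : ℕ) : Matrix (Fin 2) (Fin 2) R :=
  !![A, -B; v * b ^ i, u - v * a * ∑ k ∈ Finset.range i, b ^ k]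

variable {a b A B u v}

theorem det_intertwiner (h : A * a = B * (b - 1)) (huv : u * A + v * B = 1) (i : ℕ) :
    (intertwiner a b A B u v i).det = 1 := by
  rw [intertwiner, det_fin_two_of]
  linear_combination huv - v * (∑ k ∈ Finset.range i, b ^ k) * h - v * B * geom_sum_mul b i

theorem intertwiner_succ_mul (h : A * a = B * (b - 1)) (i : ℕ) :
    intertwiner a b A B u v (i + 1) * !![1, a; 0, b] =
      diagonal ![1, b] * intertwiner a b A B u v i := by
  rw [diagonal_fin_two, intertwiner, intertwiner, mul_fin_two, mul_fin_two,
    Finset.sum_range_succ]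
  simp only [EmbeddingLike.apply_eq_iff_eq, vecCons_inj, and_true, cons_val_zero, cons_val_one]
  exact ⟨⟨by ring, by linear_combination h⟩, by ring, by ring⟩

end Intertwiner

section LevelMap

def invPow (b : ℤ) (hb : b ≠ 0) (k : ℕ) : zOneOverPow b hb :=
  ⟨1 / (b : ℚ) ^ k, 1, k, by simp⟩

def levelMap (b : ℤ) (hb : b ≠ 0) (k : ℕ) : (Fin 2 → ℤ) →ₗ[ℤ] ℤ × zOneOverPow b hb :=
  (LinearMap.proj 0).prod ((LinearMap.toSpanSingleton ℤ _ (invPow b hb k)).comp (LinearMap.proj 1))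

variable {b : ℤ} {hb : b ≠ 0}

@[simp] theorem coe_invPow (k : ℕ) : (invPow b hb k : ℚ) = 1 / (b : ℚ) ^ k := rfl

theorem levelMap_apply (k : ℕ) (v : Fin 2 → ℤ) :
    levelMap b hb k v = (v 0, v 1 • invPow b hb k) :=
  rfl

theorem levelMap_injective (k : ℕ) : Function.Injective (levelMap b hb k) := by
  rw [← LinearMap.ker_eq_bot, LinearMap.ker_eq_bot']
  intro v hv
  rw [levelMap_apply, Prod.mk_eq_zero, ← Subtype.coe_inj] at hv
  have hbk : (b : ℚ) ^ k ≠ 0 := pow_ne_zero _ (Int.cast_ne_zero.2 hb)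
  ext j
  fin_cases j
  · exact hv.1
  · simpa [hbk] using hv.2

theorem exists_levelMap_eq (y : ℤ × zOneOverPow b hb) : ∃ k v, levelMap b hb k v = y := by
  obtain ⟨u, ⟨w, m, k, rfl⟩⟩ := y
  exact ⟨k, ![u, m], by ext <;> simp [levelMap_apply, div_eq_mul_inv]⟩

theorem levelMap_add_diagonal_pow_mulVec (i k : ℕ) (v : Fin 2 → ℤ) :
    levelMap b hb (i + k) (diagonal ![1, b] ^ k *ᵥ v) = levelMap b hb i v := by
  simp only [levelMap_apply, diagonal_pow, mulVec_diagonal]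
  ext
  · simp
  · simp only [Pi.pow_apply, cons_val_one, cons_val_fin_one, AddSubgroupClass.coe_zsmul,
      coe_invPow, zsmul_eq_mul, Int.cast_mul, Int.cast_pow, pow_add]
    have hb' : (b : ℚ) ≠ 0 := Int.cast_ne_zero.2 hb
    field_simp

end LevelMap

/-- For `|b| ≥ 2`, the direct limit of `ℤ² → ℤ² → ⋯` with all bonding maps multiplication
by `[[1, a], [0, b]]` is isomorphic, as an abelian group, to `ℤ ⊕ ℤ[1/b]`. -/
theorem stmt_17 (a b : ℤ) (hb : 2 ≤ |b|) :
    Nonempty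
      (Module.DirectLimit (fun _ : ℕ => Fin 2 → ℤ)
          (fun i j _ => ((!![1, a; 0, b] : Matrix (Fin 2) (Fin 2) ℤ) ^ (j - i)).mulVecLin)
        ≃+ ℤ × zOneOverPow b (by intro h; rw [h] at hb; simp at hb)) := by
  have hb0 : b ≠ 0 := by rintro rfl; simp at hb
  obtain ⟨A, B, ⟨u, v, huv⟩, hAB⟩ := Int.exists_isCoprime_mul_eq_mul a (b - 1)
  set P := intertwiner a b A B u v
  have hP : ∀ i, IsUnit (P i) := fun i ↦
    (isUnit_iff_isUnit_det _).2 (by rw [det_intertwiner hAB huv]; exact isUnit_one)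
  let g i := (levelMap b hb0 i).comp (P i).mulVecLin
  have hg : ∀ i j (hij : i ≤ j) x,
      g j ((!![1, a; 0, b] ^ (j - i) : Matrix (Fin 2) (Fin 2) ℤ).mulVecLin x) = g i x := by
    intro i j hij x
    obtain ⟨k, rfl⟩ := Nat.exists_eq_add_of_le hij
    simp only [g, LinearMap.comp_apply, mulVecLin_apply, Nat.add_sub_cancel_left]
    rw [mulVec_mulVec, mul_pow_eq_pow_mul_of_forall_succ (intertwiner_succ_mul hAB),
      ← mulVec_mulVec, levelMap_add_diagonal_pow_mulVec]
  refine ⟨(LinearEquiv.ofBijective (Module.DirectLimit.lift ℤ ℕ _ _ g hg) ⟨?_, ?_⟩).toAddEquiv⟩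
  · exact Module.DirectLimit.lift_injective _ _
      fun i ↦ (levelMap_injective i).comp (mulVec_injective_of_isUnit (hP i))
  · refine Module.DirectLimit.lift_surjective fun y ↦ ?_
    obtain ⟨k, w, rfl⟩ := exists_levelMap_eq y
    obtain ⟨x, rfl⟩ := mulVec_surjective_iff_isUnit.2 (hP k) w
    exact ⟨k, x, rfl⟩
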